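/- Let n > 1 and let f : ℝ → ℝ be continuous with f = F' for a C¹ function F with F(±1) = 0 and F(s) > 0 for s ∈ (-1,1). Suppose u : ℝ → ℝ is C² and solves u''(ξ) - (n-1)u'(ξ) - f(u(ξ)) = 0 on (-∞, T], with u(ξ) → -1, u'(ξ) → 0 as ξ → -∞, u'(ξ)² integrable on (-∞,T], and u'(T) = 0, u(T) ∈ (0,1). Then we obtain the identity -(n-1)∫_{-∞}^{T}(u')² dξ = F(u(T)) - F(-1) > 0, which is impossible; hence no such solution exists. -/

import Mathlib

/-!
Multiplying the equation by `u'` shows that the energy `E = (u')²/2 - F(u)` satisfies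
`E' = (n - 1)(u')² ≥ 0`, so `E` is nondecreasing on `(-∞, T]`. As `ξ → -∞` it tends to
`-F(-1) = 0`, whereas `E(T) = -F(u(T)) < 0` because `u'(T) = 0` and `u(T) ∈ (-1, 1)`.
-/

open Filter Set Topology

noncomputable def energy (F u : ℝ → ℝ) (ξ : ℝ) : ℝ := deriv u ξ ^ 2 / 2 - F (u ξ)

theorem hasDerivAt_energy {F u : ℝ → ℝ} {ξ : ℝ} (hu : DifferentiableAt ℝ u ξ)
    (hu' : DifferentiableAt ℝ (deriv u) ξ) (hF : DifferentiableAt ℝ F (u ξ)) :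
    HasDerivAt (energy F u)
      (deriv u ξ * (deriv (deriv u) ξ - deriv F (u ξ))) ξ := by
  have hkin : HasDerivAt (fun x => deriv u x ^ 2 / 2) (deriv u ξ * deriv (deriv u) ξ) ξ :=
    ((hu'.hasDerivAt.pow 2).div_const 2).congr_deriv (by push_cast; ring)
  exact (hkin.sub (hF.hasDerivAt.comp ξ hu.hasDerivAt)).congr_deriv (by ring)

theorem monotoneOn_energy_of_ode {F u : ℝ → ℝ} {c T : ℝ} (hc : 0 ≤ c)
    (hu : Differentiable ℝ u) (hu' : Differentiable ℝ (deriv u)) (hF : Differentiable ℝ F)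
    (hode : ∀ ξ ≤ T, deriv (deriv u) ξ - c * deriv u ξ - deriv F (u ξ) = 0) :
    MonotoneOn (energy F u) (Iic T) := by
  have hE : ∀ ξ, HasDerivAt (energy F u) _ ξ :=
    fun ξ => hasDerivAt_energy (hu ξ) (hu' ξ) (hF (u ξ))
  refine monotoneOn_of_deriv_nonneg (convex_Iic T)
    (fun ξ _ => (hE ξ).continuousAt.continuousWithinAt)
    (fun ξ _ => (hE ξ).differentiableAt.differentiableWithinAt) fun ξ hξ => ?_
  rw [interior_Iic] at hξ
  have hacc : deriv (deriv u) ξ - deriv F (u ξ) = c * deriv u ξ := by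
    linarith [hode ξ hξ.le]
  rw [(hE ξ).deriv, hacc, mul_left_comm]
  exact mul_nonneg hc (mul_self_nonneg _)

theorem tendsto_energy_atBot {F u : ℝ → ℝ} {a : ℝ} (hF : Continuous F)
    (hu : Tendsto u atBot (𝓝 a)) (hu' : Tendsto (deriv u) atBot (𝓝 0)) :
    Tendsto (energy F u) atBot (𝓝 (-F a)) := by
  have hkin := (hu'.pow 2).div_const 2
  have hpot := (hF.tendsto a).comp hu
  convert hkin.sub hpot using 2 <;> simp [energy]

theorem MonotoneOn.le_of_tendsto_atBot {g : ℝ → ℝ} {T L : ℝ} (hg : MonotoneOn g (Iic T))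
    (hL : Tendsto g atBot (𝓝 L)) : L ≤ g T :=
  le_of_tendsto hL <| (eventually_le_atBot T).mono fun _ hξ => hg hξ self_mem_Iic hξ

theorem no_orbit_hitting_axis_general (n : ℝ) (hn : 1 < n) (T : ℝ)
    (F : ℝ → ℝ) (hF : ContDiff ℝ 1 F)
    (hFm : F (-1) = 0)
    (hFin : ∀ s ∈ Set.Ioo (-1 : ℝ) 1, 0 < F s)
    (u : ℝ → ℝ) (hu : ContDiff ℝ 2 u)
    (hode : ∀ ξ ≤ T, deriv (deriv u) ξ - (n - 1) * deriv u ξ - deriv F (u ξ) = 0)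
    (hlimm : Tendsto u atBot (nhds (-1)))
    (hdlimm : Tendsto (deriv u) atBot (nhds 0))
    (hdT : deriv u T = 0)
    (huT : u T ∈ Set.Ioo (0 : ℝ) 1) :
    False := by
  have hu' : ContDiff ℝ 1 (deriv u) := hu.iterate_deriv' 1 1
  have hmono : MonotoneOn (energy F u) (Iic T) :=
    monotoneOn_energy_of_ode (by linarith) (hu.differentiable (by norm_num))
      (hu'.differentiable one_ne_zero) (hF.differentiable one_ne_zero) hode
  have hlim : Tendsto (energy F u) atBot (𝓝 0) := by
    simpa [hFm] using tendsto_energy_atBot hF.continuous hlimm hdlimm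
  have hET : energy F u T < 0 := by
    have : 0 < F (u T) := hFin (u T) ⟨by linarith [huT.1], huT.2⟩
    simp only [energy, hdT]
    linarith
  exact hET.not_ge (hmono.le_of_tendsto_atBot hlim)

theorem no_orbit_hitting_axis (n : ℝ) (hn : 1 < n) (T : ℝ)
    (F : ℝ → ℝ) (hF : ContDiff ℝ 1 F) (hFpos : ∀ s, 0 ≤ F s)
    (hFm : F (-1) = 0) (hFp : F 1 = 0)
    (hFin : ∀ s ∈ Set.Ioo (-1 : ℝ) 1, 0 < F s)
    (u : ℝ → ℝ) (hu : ContDiff ℝ 2 u)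
    (hode : ∀ ξ ≤ T, deriv (deriv u) ξ - (n - 1) * deriv u ξ - deriv F (u ξ) = 0)
    (hlimm : Tendsto u atBot (nhds (-1)))
    (hdlimm : Tendsto (deriv u) atBot (nhds 0))
    (hint : MeasureTheory.IntegrableOn (fun ξ => (deriv u ξ) ^ 2) (Set.Iic T))
    (hdT : deriv u T = 0)
    (huT : u T ∈ Set.Ioo (0 : ℝ) 1) :
    False :=
  no_orbit_hitting_axis_general n hn T F hF hFm hFin u hu hode hlimm hdlimm hdT huT
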